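/- arXiv:2312.11788 — 3 statements merged into one kernel-verified Lean document; each statement's English description precedes it below -/
import Mathlib

section
/- Let f : ℝ^d → ℝ be convex, β-smooth, and differentiable, with global minimizer x*. If z satisfies f(z) - f(x*) > ε for some ε > 0, then ⟪∇f(z)/‖∇f(z)‖, z - x*⟫ ≥ √(2ε/β). -/
open scoped RealInnerProductSpace

/-- If `f` is convex, differentiable and `β`-smooth with global minimizer `xstar`,
and `f z - f xstar > ε`, then `⟪∇f(z)/‖∇f(z)‖, z - xstar⟫ ≥ √(2ε/β)`. -/
theorem smooth_convex_normalized_grad_inner_lower_bound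
    (d : ℕ) (β ε : ℝ) (hβ : 0 < β) (hε : 0 < ε)
    (f : EuclideanSpace ℝ (Fin d) → ℝ) (g : EuclideanSpace ℝ (Fin d) → EuclideanSpace ℝ (Fin d))
    (hconv : ∀ x y, f x + ⟪g x, y - x⟫ ≤ f y)
    (hsmooth : ∀ x y, f y ≤ f x + ⟪g x, y - x⟫ + (β / 2) * ‖y - x‖ ^ 2)
    (xstar : EuclideanSpace ℝ (Fin d))
    (hmin : ∀ x, f xstar ≤ f x) (hgrad0 : g xstar = 0)
    (z : EuclideanSpace ℝ (Fin d)) (hz : ε < f z - f xstar) :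
    Real.sqrt (2 * ε / β) ≤ ⟪(‖g z‖)⁻¹ • g z, z - xstar⟫ := by
  have hgz : g z ≠ 0 := by
    intro h
    have h1 := hconv z xstar
    rw [h, inner_zero_left] at h1
    linarith
  set t : ℝ := ‖g z‖ with ht
  have htpos : 0 < t := norm_pos_iff.mpr hgz
  set w : EuclideanSpace ℝ (Fin d) := xstar + β⁻¹ • g z with hw
  have hwx : w - xstar = β⁻¹ • g z := by simp [hw]
  have h1 : f w ≤ f xstar + t ^ 2 / (2 * β) := by
    have := hsmooth xstar w
    rw [hgrad0, inner_zero_left, hwx, norm_smul] at this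
    have hβ' : β⁻¹ ≠ 0 := by positivity
    simp only [Real.norm_eq_abs, abs_of_pos (inv_pos.mpr hβ)] at this
    calc f w ≤ f xstar + 0 + β / 2 * (β⁻¹ * t) ^ 2 := this
      _ = f xstar + t ^ 2 / (2 * β) := by field_simp; ring
  have h2 : f z + ⟪g z, xstar - z⟫ + β⁻¹ * t ^ 2 ≤ f w := by
    have := hconv z w
    have hwz : w - z = (xstar - z) + β⁻¹ • g z := by rw [hw]; abel
    rw [hwz, inner_add_right, inner_smul_right, real_inner_self_eq_norm_sq] at this
    linarith [this]
  have hkey : (f z - f xstar) + t ^ 2 / (2 * β) ≤ ⟪g z, z - xstar⟫ := by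
    have hinner : ⟪g z, z - xstar⟫ = -⟪g z, xstar - z⟫ := by
      rw [← inner_neg_right]; congr 1; abel
    rw [hinner]
    have : β⁻¹ * t ^ 2 - t ^ 2 / (2 * β) = t ^ 2 / (2 * β) := by field_simp; ring
    nlinarith [h1, h2]
  have hslem : t * Real.sqrt (2 * ε / β) ≤ ε + t ^ 2 / (2 * β) := by
    set s : ℝ := Real.sqrt (2 * ε / β) with hs
    have hs2 : s ^ 2 = 2 * ε / β := Real.sq_sqrt (by positivity)
    have hsnn : 0 ≤ s := Real.sqrt_nonneg _
    have hε' : ε = β * s ^ 2 / 2 := by rw [hs2]; field_simp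
    rw [hε']
    have h4 : β * s ^ 2 / 2 + t ^ 2 / (2 * β) = (β ^ 2 * s ^ 2 + t ^ 2) / (2 * β) := by
      field_simp
    rw [h4, le_div_iff₀ (by positivity)]
    nlinarith [sq_nonneg (t - β * s)]
  rw [inner_smul_left]
  have : t * Real.sqrt (2 * ε / β) ≤ ⟪g z, z - xstar⟫ := by linarith
  simp only [starRingEnd_apply, star_trivial]
  rw [← div_eq_inv_mul, le_div_iff₀ htpos]
  linarith [this, mul_comm t (Real.sqrt (2 * ε / β))]
end

section
/- Let f : ℝ^d → ℝ be β-smooth and differentiable, let x, u ∈ ℝ^d with ‖u‖ = 1 and γ > 0. If βγ < |⟪u, ∇f(x)⟫|, then sign(f(x + γu) - f(x - γu)) = sign(⟪u, ∇f(x)⟫), where sign(t) = 1 if t ≥ 0 and -1 otherwise. -/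
open scoped RealInnerProductSpace

/-- The sign function: `1` if `t ≥ 0`, `-1` otherwise. -/
noncomputable def sgn (t : ℝ) : ℝ := if 0 ≤ t then 1 else -1

lemma sgn_mul_of_pos {c : ℝ} (hc : 0 < c) (t : ℝ) : sgn (c * t) = sgn t := by
  simp only [sgn, mul_nonneg_iff_of_pos_left hc]

lemma sgn_eq_of_abs_sub_lt {a b : ℝ} (h : |a - b| < |b|) : sgn a = sgn b := by
  rcases le_or_gt 0 b with hb | hb
  · have ha : 0 ≤ a := by
      rw [abs_of_nonneg hb] at h
      linarith [neg_abs_le (a - b)]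
    simp only [sgn, ha, hb, if_true]
  · have ha : a < 0 := by
      rw [abs_of_neg hb] at h
      linarith [le_abs_self (a - b)]
    simp only [sgn, not_le.mpr ha, not_le.mpr hb, if_false]

/-- The first-order errors at `x + v` and `x - v` cancel in the central difference, leaving
twice the directional derivative up to the two second-order errors. -/
lemma abs_central_difference_sub_le {E : Type*} [NormedAddCommGroup E] [InnerProductSpace ℝ E]
    {f : E → ℝ} {g : E → E} {β : ℝ}
    (hf : ∀ x y, |f y - f x - ⟪g x, y - x⟫| ≤ (β / 2) * ‖y - x‖ ^ 2) (x v : E) :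
    |f (x + v) - f (x - v) - 2 * ⟪g x, v⟫| ≤ β * ‖v‖ ^ 2 := by
  have hplus := hf x (x + v)
  have hminus := hf x (x - v)
  rw [add_sub_cancel_left] at hplus
  rw [sub_sub_cancel_left, inner_neg_right, norm_neg] at hminus
  calc |f (x + v) - f (x - v) - 2 * ⟪g x, v⟫|
      = |(f (x + v) - f x - ⟪g x, v⟫) - (f (x - v) - f x - -⟪g x, v⟫)| := by ring_nf
    _ ≤ |f (x + v) - f x - ⟪g x, v⟫| + |f (x - v) - f x - -⟪g x, v⟫| := abs_sub _ _
    _ ≤ (β / 2) * ‖v‖ ^ 2 + (β / 2) * ‖v‖ ^ 2 := add_le_add hplus hminus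
    _ = β * ‖v‖ ^ 2 := by ring

theorem smooth_sign_recovery_general
    (d : ℕ) (β γ : ℝ) (hγ : 0 < γ)
    (f : EuclideanSpace ℝ (Fin d) → ℝ) (g : EuclideanSpace ℝ (Fin d) → EuclideanSpace ℝ (Fin d))
    (hsmooth : ∀ x y, |f y - f x - ⟪g x, y - x⟫| ≤ (β / 2) * ‖y - x‖ ^ 2)
    (x u : EuclideanSpace ℝ (Fin d)) (hu : ‖u‖ = 1)
    (hgap : β * γ < |⟪u, g x⟫|) :
    sgn (f (x + γ • u) - f (x - γ • u)) = sgn ⟪u, g x⟫ := by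
  have herror := abs_central_difference_sub_le hsmooth x (γ • u)
  rw [norm_smul, hu, mul_one, Real.norm_of_nonneg hγ.le, real_inner_smul_right,
    real_inner_comm, ← mul_assoc] at herror
  have hsmall : β * γ ^ 2 < |2 * γ * ⟪u, g x⟫| := by
    rw [abs_mul, abs_of_pos (by positivity : (0 : ℝ) < 2 * γ)]
    nlinarith [abs_nonneg ⟪u, g x⟫]
  rw [sgn_eq_of_abs_sub_lt (herror.trans_lt hsmall), sgn_mul_of_pos (by positivity)]

/-- For `β`-smooth `f`, a unit vector `u`, `γ > 0` with `βγ < |⟪u, ∇f(x)⟫|`, the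
sign of the symmetric difference `f(x+γu) - f(x-γu)` equals the sign of `⟪u, ∇f(x)⟫`. -/
theorem smooth_sign_recovery
    (d : ℕ) (β γ : ℝ) (hβ : 0 < β) (hγ : 0 < γ)
    (f : EuclideanSpace ℝ (Fin d) → ℝ) (g : EuclideanSpace ℝ (Fin d) → EuclideanSpace ℝ (Fin d))
    (hsmooth : ∀ x y, |f y - f x - ⟪g x, y - x⟫| ≤ (β / 2) * ‖y - x‖ ^ 2)
    (x u : EuclideanSpace ℝ (Fin d)) (hu : ‖u‖ = 1)
    (hgap : β * γ < |⟪u, g x⟫|) :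
    sgn (f (x + γ • u) - f (x - γ • u)) = sgn ⟪u, g x⟫ :=
  smooth_sign_recovery_general d β γ hγ f g hsmooth x u hu hgap
end

section
/- Let g ∈ ℝ^d be a nonzero vector and u uniform on the unit sphere S^{d-1}. Then E[sign(⟪g, u⟫)·u] = c_d · g/‖g‖ where c_d = E[|u₁|], and c_d ∈ [1/(20√d), 1/√d]. -/
open MeasureTheory
open scoped RealInnerProductSpace

variable {d : ℕ}

local notation "ES" d => EuclideanSpace ℝ (Fin d)

lemma key_cov {α : Type*} [NormedAddCommGroup α] [NormedSpace ℝ α]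
    (μ : Measure (ES d)) (T : (ES d) ≃ₗᵢ[ℝ] (ES d)) (hT : μ.map T = μ)
    (f : (ES d) → α) (hf : AEStronglyMeasurable f μ) :
    ∫ u, f (T u) ∂μ = ∫ u, f u ∂μ := by
  conv_rhs => rw [← hT]
  rw [integral_map T.continuous.aemeasurable (by rwa [hT])]

lemma refl_adj (K : Submodule ℝ (ES d)) [K.HasOrthogonalProjection] (x y : ES d) :
    ⟪x, (Submodule.reflection K) y⟫ = ⟪(Submodule.reflection K) x, y⟫ := by
  conv_lhs => rw [← Submodule.reflection_reflection K x]
  rw [LinearIsometryEquiv.inner_map_map]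

lemma meas_coord (i : Fin d) : Measurable fun u : ES d => u i :=
  ((continuous_apply i).comp (PiLp.continuous_ofLp 2 _)).measurable

lemma coord_eq_inner (u : ES d) (i : Fin d) :
    u i = ⟪EuclideanSpace.single i (1:ℝ), u⟫ := by
  rw [EuclideanSpace.inner_single_left]; simp

lemma inner_moment (μ : Measure (ES d)) 
    (hinv : ∀ T : (ES d) ≃ₗᵢ[ℝ] (ES d), μ.map T = μ)
    (v : ES d) (hv : ‖v‖ = 1) (z : Fin d) (f : ℝ → ℝ) (hf : Measurable f) :
    ∫ u, f ⟪v, u⟫ ∂μ = ∫ u, f (u z) ∂μ := by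
  set e : ES d := EuclideanSpace.single z (1:ℝ) with he
  have hR : (Submodule.reflection (ℝ ∙ (e - v))ᗮ) e = v :=
    Submodule.reflection_sub (by rw [EuclideanSpace.norm_single, hv]; simp)
  have hmeas : AEStronglyMeasurable (fun u : ES d => f ⟪e, u⟫) μ :=
    (hf.comp (Continuous.inner continuous_const continuous_id).measurable).aestronglyMeasurable
  calc ∫ u, f ⟪v, u⟫ ∂μ 
      = ∫ u, f ⟪e, (Submodule.reflection (ℝ ∙ (e - v))ᗮ) u⟫ ∂μ := by
        refine integral_congr_ae (Filter.Eventually.of_forall fun u => ?_)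
        dsimp only
        rw [refl_adj, hR]
    _ = ∫ u, f ⟪e, u⟫ ∂μ := key_cov μ _ (hinv _) _ hmeas
    _ = ∫ u, f (u z) ∂μ := by
        refine integral_congr_ae (Filter.Eventually.of_forall fun u => ?_)
        dsimp only
        rw [coord_eq_inner u z]

lemma pair_moment (μ : Measure (ES d))
    (hinv : ∀ T : (ES d) ≃ₗᵢ[ℝ] (ES d), μ.map T = μ)
    (z o i j : Fin d) (hzo : z ≠ o) (hij : i ≠ j) (f : ℝ → ℝ → ℝ)
    (hf : Measurable (Function.uncurry f)) :
    ∫ u, f (u i) (u j) ∂μ = ∫ u, f (u z) (u o) ∂μ := by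
  classical
  set σ₁ := Equiv.swap z i with hσ₁
  set σ := (Equiv.swap o (σ₁ j)).trans σ₁ with hσ
  have hσz : σ z = i := by
    have h1 : z ≠ σ₁ j := by
      intro h
      apply hij
      have := congrArg σ₁ h
      rwa [hσ₁, Equiv.swap_apply_left, Equiv.swap_apply_self] at this
    rw [hσ, Equiv.trans_apply, Equiv.swap_apply_of_ne_of_ne hzo h1, hσ₁,
      Equiv.swap_apply_left]
  have hσo : σ o = j := by
    simp [hσ, hσ₁, Equiv.trans_apply, Equiv.swap_apply_left, Equiv.swap_apply_self]
  set T := LinearIsometryEquiv.piLpCongrLeft 2 ℝ ℝ σ.symm with hT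
  have hTu : ∀ (u : ES d) (k : Fin d), (T u) k = u (σ k) := by
    intro u k
    rw [hT, LinearIsometryEquiv.piLpCongrLeft_apply]
    simp [Equiv.piCongrLeft'_apply]
  have hmeas : AEStronglyMeasurable (fun u : ES d => f (u z) (u o)) μ :=
    (hf.comp ((meas_coord z).prodMk (meas_coord o))).aestronglyMeasurable
  calc ∫ u, f (u i) (u j) ∂μ 
      = ∫ u, f ((T u) z) ((T u) o) ∂μ := by
        refine integral_congr_ae (Filter.Eventually.of_forall fun u => ?_)
        dsimp only
        rw [hTu, hTu, hσz, hσo]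
    _ = ∫ u, f (u z) (u o) ∂μ := key_cov μ T (hinv T) _ hmeas

lemma flip_cov (μ : Measure (ES d))
    (hinv : ∀ T : (ES d) ≃ₗᵢ[ℝ] (ES d), μ.map T = μ)
    (z o : Fin d) (hzo : z ≠ o) (f : ℝ → ℝ → ℝ)
    (hf : Measurable (Function.uncurry f)) :
    ∫ u, f (u z) (u o) ∂μ = ∫ u, f (u z) (-(u o)) ∂μ := by
  set eo : ES d := EuclideanSpace.single o (1:ℝ) with heo
  set ez : ES d := EuclideanSpace.single z (1:ℝ) with hez
  set R := Submodule.reflection (ℝ ∙ eo)ᗮ with hRdef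
  have hRz : R ez = ez := by
    apply Submodule.reflection_mem_subspace_eq_self
    rw [Submodule.mem_orthogonal_singleton_iff_inner_left]
    rw [heo, hez, EuclideanSpace.inner_single_left]
    simp [EuclideanSpace.single_apply, hzo]
  have hRo : R eo = -eo := Submodule.reflection_orthogonalComplement_singleton_eq_neg eo
  have hmeas : AEStronglyMeasurable (fun u : ES d => f (u z) (u o)) μ :=
    (hf.comp ((meas_coord z).prodMk (meas_coord o))).aestronglyMeasurable
  calc ∫ u, f (u z) (u o) ∂μ 
      = ∫ u, f ((R u) z) ((R u) o) ∂μ := (key_cov μ R (hinv R) _ hmeas).symm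
    _ = ∫ u, f (u z) (-(u o)) ∂μ := by
        refine integral_congr_ae (Filter.Eventually.of_forall fun u => ?_)
        dsimp only
        rw [coord_eq_inner (R u) z, coord_eq_inner (R u) o, refl_adj, refl_adj, hRz, hRo,
          inner_neg_left, ← coord_eq_inner, ← coord_eq_inner]

lemma meas_coord' (i : Fin d) : Measurable fun u : ES d => u i :=
  ((continuous_apply i).comp (PiLp.continuous_ofLp 2 _)).measurable

lemma coord_eq_inner' (u : ES d) (i : Fin d) :
    u i = ⟪EuclideanSpace.single i (1:ℝ), u⟫ := by
  rw [EuclideanSpace.inner_single_left]; simp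

lemma abs_coord_le (u : ES d) (i : Fin d) : |u i| ≤ ‖u‖ := by
  rw [coord_eq_inner' u i]
  refine (abs_real_inner_le_norm _ _).trans ?_
  rw [EuclideanSpace.norm_single]; simp

lemma integ_bdd' {α : Type*} [NormedAddCommGroup α] (μ : Measure (ES d)) [IsProbabilityMeasure μ]
    (hsupp : ∀ᵐ u ∂μ, ‖u‖ = 1) (f : (ES d) → α) (hm : AEStronglyMeasurable f μ) (C : ℝ)
    (hb : ∀ u : ES d, ‖u‖ = 1 → ‖f u‖ ≤ C) : Integrable f μ :=
  ⟨hm, HasFiniteIntegral.of_bounded (C := C) (by filter_upwards [hsupp] with u hu using hb u hu)⟩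

lemma sum_sq_coords (u : ES d) : ∑ i, (u i)^2 = ‖u‖^2 := by
  rw [EuclideanSpace.norm_eq, Real.sq_sqrt (by positivity)]
  exact Finset.sum_congr rfl fun i _ => by rw [Real.norm_eq_abs, sq_abs]

lemma moment2 (μ : Measure (ES d)) [IsProbabilityMeasure μ]
    (hsupp : ∀ᵐ u ∂μ, ‖u‖ = 1)
    (hinv : ∀ T : (ES d) ≃ₗᵢ[ℝ] (ES d), μ.map T = μ) (z : Fin d) :
    ∫ u, (u z)^2 ∂μ = 1/(d:ℝ) := by
  have hdpos : (0:ℝ) < d := by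
    have : 0 < d := Fin.pos z
    exact_mod_cast this
  have hint : ∀ i : Fin d, Integrable (fun u : ES d => (u i)^2) μ := by
    intro i
    refine integ_bdd' μ hsupp _ ((meas_coord' i).pow_const 2).aestronglyMeasurable 1 ?_
    intro u hu
    rw [Real.norm_eq_abs, abs_pow, ← one_pow 2]
    exact pow_le_pow_left₀ (abs_nonneg _) (by rw [← hu]; exact abs_coord_le u i) 2
  have hsum : ∫ u, (∑ i, (u i)^2) ∂μ = 1 := by
    have : ∫ u, (∑ i, (u i)^2) ∂μ = ∫ (_ : ES d), (1:ℝ) ∂μ := by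
      refine integral_congr_ae ?_
      filter_upwards [hsupp] with u hu
      rw [sum_sq_coords, hu, one_pow]
    rw [this]; simp
  rw [integral_finset_sum _ (fun i _ => hint i)] at hsum
  have heach : ∀ i : Fin d, ∫ u, (u i)^2 ∂μ = ∫ u, (u z)^2 ∂μ := by
    intro i
    have h := inner_moment μ hinv (EuclideanSpace.single i (1:ℝ))
      (by rw [EuclideanSpace.norm_single]; simp) z (fun t => t^2) (measurable_id.pow_const 2)
    calc ∫ u, (u i)^2 ∂μ = ∫ u, ⟪EuclideanSpace.single i (1:ℝ), u⟫^2 ∂μ := by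
          refine integral_congr_ae (Filter.Eventually.of_forall fun u => ?_)
          dsimp only
          rw [coord_eq_inner' u i]
      _ = ∫ u, (u z)^2 ∂μ := h
  rw [Finset.sum_congr rfl (fun i _ => heach i), Finset.sum_const, Finset.card_univ,
    Fintype.card_fin, nsmul_eq_mul] at hsum
  field_simp at hsum ⊢
  linarith

lemma moment4 (μ : Measure (ES d)) [IsProbabilityMeasure μ]
    (hsupp : ∀ᵐ u ∂μ, ‖u‖ = 1)
    (hinv : ∀ T : (ES d) ≃ₗᵢ[ℝ] (ES d), μ.map T = μ) (z o : Fin d) (hzo : z ≠ o) :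
    ∫ u, (u z)^4 ∂μ = 3/((d:ℝ)^2 + 2*d) := by
  have hd1 : 1 ≤ d := Nat.one_le_iff_ne_zero.mpr (by rintro rfl; exact z.elim0)
  have hdpos : (0:ℝ) < d := by exact_mod_cast Nat.lt_of_lt_of_le Nat.zero_lt_one hd1
  -- integrability of monomials
  have hmono : ∀ (i j : Fin d) (a b : ℕ), Integrable (fun u : ES d => (u i)^a * (u j)^b) μ := by
    intro i j a b
    refine integ_bdd' μ hsupp _
      (((meas_coord' i).pow_const a).mul ((meas_coord' j).pow_const b)).aestronglyMeasurable 1 ?_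
    intro u hu
    rw [Real.norm_eq_abs, abs_mul, abs_pow, abs_pow]
    have h1 : |u i| ≤ 1 := by rw [← hu]; exact abs_coord_le u i
    have h2 : |u j| ≤ 1 := by rw [← hu]; exact abs_coord_le u j
    calc |u i|^a * |u j|^b ≤ 1 * 1 :=
          mul_le_mul (pow_le_one₀ (abs_nonneg _) h1) (pow_le_one₀ (abs_nonneg _) h2)
            (by positivity) zero_le_one
      _ = 1 := mul_one 1
  set Q := ∫ u, (u z)^4 ∂μ with hQdef
  set P := ∫ u, (u z)^2 * (u o)^2 ∂μ with hPdef
  -- all fourth powers equal Q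
  have hQi : ∀ i : Fin d, ∫ u, (u i)^4 ∂μ = Q := by
    intro i
    have h := inner_moment μ hinv (EuclideanSpace.single i (1:ℝ))
      (by rw [EuclideanSpace.norm_single]; simp) z (fun t => t^4) (measurable_id.pow_const 4)
    calc ∫ u, (u i)^4 ∂μ = ∫ u, ⟪EuclideanSpace.single i (1:ℝ), u⟫^4 ∂μ := by
          refine integral_congr_ae (Filter.Eventually.of_forall fun u => ?_)
          dsimp only
          rw [coord_eq_inner' u i]
      _ = Q := h
  -- all off-diagonal products equal P
  have hPij : ∀ i j : Fin d, i ≠ j → ∫ u, (u i)^2 * (u j)^2 ∂μ = P := by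
    intro i j hij
    exact pair_moment μ hinv z o i j hzo hij (fun x y => x^2 * y^2)
      ((measurable_fst.pow_const 2).mul (measurable_snd.pow_const 2))
  -- sum of all pairwise second moments is 1
  have hsum2 : ∑ i : Fin d, ∑ j : Fin d, ∫ u, (u i)^2 * (u j)^2 ∂μ = 1 := by
    have h1 : ∫ u, (∑ i, (u i)^2)^2 ∂μ = 1 := by
      have : ∫ u, (∑ i, (u i)^2)^2 ∂μ = ∫ (_ : ES d), (1:ℝ) ∂μ := by
        refine integral_congr_ae ?_
        filter_upwards [hsupp] with u hu
        rw [sum_sq_coords, hu]; norm_num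
      rw [this]; simp
    have h2 : ∀ u : ES d, (∑ i, (u i)^2)^2 = ∑ i : Fin d, ∑ j : Fin d, (u i)^2 * (u j)^2 := by
      intro u
      rw [sq, Finset.sum_mul_sum]
    rw [← h1]
    rw [integral_congr_ae (Filter.Eventually.of_forall fun u => h2 u)]
    rw [integral_finset_sum _ (fun i _ => integrable_finset_sum _ (fun j _ => hmono i j 2 2))]
    exact Finset.sum_congr rfl fun i _ => (integral_finset_sum _ (fun j _ => hmono i j 2 2)).symm
  -- each row sums to Q + (d-1) P
  have hrow : ∀ i : Fin d, ∑ j : Fin d, ∫ u, (u i)^2 * (u j)^2 ∂μ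
      = Q + ((d:ℝ) - 1) * P := by
    intro i
    rw [← Finset.add_sum_erase _ _ (Finset.mem_univ i)]
    have hdiag : ∫ u, (u i)^2 * (u i)^2 ∂μ = Q := by
      rw [← hQi i]
      refine integral_congr_ae (Filter.Eventually.of_forall fun u => ?_)
      dsimp only; ring
    rw [hdiag]
    congr 1
    rw [Finset.sum_congr rfl (fun j hj => hPij i j (Finset.ne_of_mem_erase hj).symm),
      Finset.sum_const, Finset.card_erase_of_mem (Finset.mem_univ i), Finset.card_univ,
      Fintype.card_fin, nsmul_eq_mul]
    push_cast [Nat.cast_sub hd1]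
    ring
  have hsum3 : (d:ℝ) * (Q + ((d:ℝ) - 1) * P) = 1 := by
    have h := hsum2
    rw [Finset.sum_congr rfl (fun i _ => hrow i), Finset.sum_const, Finset.card_univ,
      Fintype.card_fin, nsmul_eq_mul] at h
    exact h
  -- cross terms vanish
  have hc1 : ∫ u, (u z)^3 * (u o)^1 ∂μ = 0 := by
    have h := flip_cov μ hinv z o hzo (fun x y => x^3 * y^1)
      ((measurable_fst.pow_const 3).mul (measurable_snd.pow_const 1))
    have h2 : ∫ u, (fun x y => x^3 * y^1) (u z) (-(u o)) ∂μ = - ∫ u, (u z)^3 * (u o)^1 ∂μ := by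
      rw [← integral_neg]
      refine integral_congr_ae (Filter.Eventually.of_forall fun u => ?_)
      dsimp only; ring
    rw [h2] at h
    linarith
  have hc2 : ∫ u, (u z)^1 * (u o)^3 ∂μ = 0 := by
    have h := flip_cov μ hinv z o hzo (fun x y => x^1 * y^3)
      ((measurable_fst.pow_const 1).mul (measurable_snd.pow_const 3))
    have h2 : ∫ u, (fun x y => x^1 * y^3) (u z) (-(u o)) ∂μ = - ∫ u, (u z)^1 * (u o)^3 ∂μ := by
      rw [← integral_neg]
      refine integral_congr_ae (Filter.Eventually.of_forall fun u => ?_)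
      dsimp only; ring
    rw [h2] at h
    linarith
  -- diagonal direction: Q = 3 P
  have hQ3 : Q = 3 * P := by
    set ez : ES d := EuclideanSpace.single z (1:ℝ) with hez
    set eo : ES d := EuclideanSpace.single o (1:ℝ) with heo
    have hee : ⟪ez, eo⟫ = 0 := by
      rw [hez, EuclideanSpace.inner_single_left]
      simp [heo, EuclideanSpace.single_apply, hzo]
    have hnorm2 : ‖ez + eo‖^2 = 2 := by
      rw [norm_add_sq_real, hee]
      rw [hez, heo, EuclideanSpace.norm_single, EuclideanSpace.norm_single]
      norm_num
    have hnorm : ‖ez + eo‖ = Real.sqrt 2 := by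
      rw [← Real.sqrt_sq (norm_nonneg _), hnorm2]
    set v : ES d := (Real.sqrt 2)⁻¹ • (ez + eo) with hv
    have hs2 : (0:ℝ) < Real.sqrt 2 := Real.sqrt_pos.mpr (by norm_num)
    have hvnorm : ‖v‖ = 1 := by
      rw [hv, norm_smul, hnorm, Real.norm_eq_abs, abs_of_pos (inv_pos.mpr hs2),
        inv_mul_cancel₀ hs2.ne']
    have hvin : ∀ u : ES d, ⟪v, u⟫ = (Real.sqrt 2)⁻¹ * (u z + u o) := by
      intro u
      rw [hv, real_inner_smul_left, inner_add_left, ← coord_eq_inner', ← coord_eq_inner']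
    have hQv : ∫ u, ⟪v, u⟫^4 ∂μ = Q :=
      inner_moment μ hinv v hvnorm z (fun t => t^4) (measurable_id.pow_const 4)
    have h4 : ((Real.sqrt 2)⁻¹)^4 = 1/4 := by
      have h24 : (Real.sqrt 2)^4 = 4 := by
        nlinarith [Real.sq_sqrt (by norm_num : (0:ℝ) ≤ 2)]
      rw [inv_pow, h24]
      norm_num
    have hexpand : ∫ u, ⟪v, u⟫^4 ∂μ = (1/4) * (Q + (4 * 0 + (6 * P + (4 * 0 + Q)))) := by
      have hstep : ∫ u, ⟪v, u⟫^4 ∂μ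
          = ∫ u, (1/4) * ((u z)^4 * (u o)^0 + (4 * ((u z)^3 * (u o)^1)
            + (6 * ((u z)^2 * (u o)^2) + (4 * ((u z)^1 * (u o)^3) + (u z)^0 * (u o)^4)))) ∂μ := by
        refine integral_congr_ae (Filter.Eventually.of_forall fun u => ?_)
        dsimp only
        rw [hvin u, mul_pow, h4]
        ring
      rw [hstep, integral_const_mul]
      congr 1
      have I5 : Integrable (fun u : ES d => (u z)^0 * (u o)^4) μ := hmono z o 0 4
      have I4 : Integrable (fun u : ES d => 4 * ((u z)^1 * (u o)^3)) μ :=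
        (hmono z o 1 3).const_mul 4
      have I3 : Integrable (fun u : ES d => 6 * ((u z)^2 * (u o)^2)) μ :=
        (hmono z o 2 2).const_mul 6
      have I2 : Integrable (fun u : ES d => 4 * ((u z)^3 * (u o)^1)) μ :=
        (hmono z o 3 1).const_mul 4
      have I45 : Integrable (fun u : ES d => 4 * ((u z)^1 * (u o)^3) + (u z)^0 * (u o)^4) μ :=
        I4.add I5
      have I345 : Integrable (fun u : ES d => 6 * ((u z)^2 * (u o)^2)
          + (4 * ((u z)^1 * (u o)^3) + (u z)^0 * (u o)^4)) μ := I3.add I45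
      have I2345 : Integrable (fun u : ES d => 4 * ((u z)^3 * (u o)^1)
          + (6 * ((u z)^2 * (u o)^2) + (4 * ((u z)^1 * (u o)^3) + (u z)^0 * (u o)^4))) μ :=
        I2.add I345
      have e1 : ∫ u, (u z)^4 * (u o)^0 ∂μ = Q := by
        rw [hQdef]
        refine integral_congr_ae (Filter.Eventually.of_forall fun u => ?_)
        dsimp only; ring
      have e2 : ∫ u, (u z)^0 * (u o)^4 ∂μ = Q := by
        rw [← hQi o]
        refine integral_congr_ae (Filter.Eventually.of_forall fun u => ?_)
        dsimp only; ring
      have e3 : ∫ u, (u z)^2 * (u o)^2 ∂μ = P := hPdef.symm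
      have A5 : ∫ u, (4 * ((u z)^1 * (u o)^3) + (u z)^0 * (u o)^4) ∂μ = 4 * 0 + Q := by
        rw [integral_add I4 I5, integral_const_mul, hc2, e2]
      have A4 : ∫ u, (6 * ((u z)^2 * (u o)^2)
          + (4 * ((u z)^1 * (u o)^3) + (u z)^0 * (u o)^4)) ∂μ = 6 * P + (4 * 0 + Q) := by
        rw [integral_add I3 I45, integral_const_mul, e3, A5]
      have A3 : ∫ u, (4 * ((u z)^3 * (u o)^1)
          + (6 * ((u z)^2 * (u o)^2) + (4 * ((u z)^1 * (u o)^3) + (u z)^0 * (u o)^4))) ∂μ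
          = 4 * 0 + (6 * P + (4 * 0 + Q)) := by
        rw [integral_add I2 I345, integral_const_mul, hc1, A4]
      rw [integral_add (hmono z o 4 0) I2345, e1, A3]
    rw [hQv] at hexpand
    linarith
  -- combine
  have hfin : ((d:ℝ)^2 + 2*d) * P = 1 := by linear_combination hsum3 - (d:ℝ) * hQ3
  have hpos : (0:ℝ) < (d:ℝ)^2 + 2*d := by positivity
  show Q = 3/((d:ℝ)^2 + 2*d)
  rw [hQ3]
  field_simp
  linarith

lemma aux_up (sg a : ℝ) (hsg : 0 < sg) : |a| ≤ (sg * a^2 + 1/sg) / 2 := by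
  have h1 : 0 ≤ (sg*|a| - 1)^2 := sq_nonneg _
  have h2 : sg * (sg*a^2 + 1/sg - 2*|a|) = (sg*|a| - 1)^2 := by
    rw [← sq_abs a]
    field_simp
    ring_nf
  nlinarith [h1, h2, hsg]

lemma aux_low (r : ℝ) (hr : 0 ≤ r) : r^2/2 - r^4/8 ≤ r := by
  nlinarith [mul_nonneg hr (sq_nonneg (r-2)), sq_nonneg (r-1)]

set_option maxHeartbeats 1600000 in
/-- For a nonzero `g ∈ ℝ^d` and `u` uniform on the unit sphere,
`E[sign(⟪g,u⟫) • u] = c_d • (g/‖g‖)` where `c_d = E[|u₁|] ∈ [1/(20√d), 1/√d]`. -/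
theorem uniform_sphere_sign_inner_expectation
    (d : ℕ) (hd : 0 < d)
    (μ : Measure (EuclideanSpace ℝ (Fin d))) [IsProbabilityMeasure μ]
    (hsupp : ∀ᵐ u ∂μ, ‖u‖ = 1)
    (hinv : ∀ T : EuclideanSpace ℝ (Fin d) ≃ₗᵢ[ℝ] EuclideanSpace ℝ (Fin d),
      μ.map T = μ)
    (g : EuclideanSpace ℝ (Fin d)) (hg : g ≠ 0) :
    (∫ u, sgn ⟪g, u⟫ • u ∂μ) = (∫ u, |(u ⟨0, hd⟩ : ℝ)| ∂μ) • ((‖g‖)⁻¹ • g) ∧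
    1 / (20 * Real.sqrt d) ≤ (∫ u, |(u ⟨0, hd⟩ : ℝ)| ∂μ) ∧
    (∫ u, |(u ⟨0, hd⟩ : ℝ)| ∂μ) ≤ 1 / Real.sqrt d := by
  classical
  set z : Fin d := ⟨0, hd⟩ with hz
  have hdR : (0:ℝ) < d := by exact_mod_cast hd
  set s := Real.sqrt d with hsdef
  have hs0 : 0 < s := Real.sqrt_pos.mpr hdR
  have hs2 : s^2 = d := Real.sq_sqrt hdR.le
  have hm2 := moment2 μ hsupp hinv z
  -- basic measurability
  have hinner : ∀ w : EuclideanSpace ℝ (Fin d), Measurable fun u : EuclideanSpace ℝ (Fin d) => ⟪w, u⟫ :=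
    fun w => (Continuous.inner continuous_const continuous_id).measurable
  have hsgnm : Measurable sgn := by
    unfold sgn
    exact Measurable.ite (measurableSet_le measurable_const measurable_id)
      measurable_const measurable_const
  have hsm : ∀ w : EuclideanSpace ℝ (Fin d),
      Measurable fun u : EuclideanSpace ℝ (Fin d) => sgn ⟪w, u⟫ :=
    fun w => hsgnm.comp (hinner w)
  have habs_sgn : ∀ t : ℝ, |sgn t| = 1 := by
    intro t; unfold sgn; split_ifs <;> simp
  have hsgn_mul : ∀ t : ℝ, sgn t * t = |t| := by
    intro t; unfold sgn
    split_ifs with h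
    · rw [one_mul, abs_of_nonneg h]
    · rw [neg_one_mul, abs_of_neg (not_le.mp h)]
  -- integrability of monomials in coordinates
  have hmono : ∀ (i j : Fin d) (a b : ℕ),
      Integrable (fun u : EuclideanSpace ℝ (Fin d) => (u i)^a * (u j)^b) μ := by
    intro i j a b
    refine integ_bdd' μ hsupp _
      (((meas_coord' i).pow_const a).mul ((meas_coord' j).pow_const b)).aestronglyMeasurable 1 ?_
    intro u hu
    rw [Real.norm_eq_abs, abs_mul, abs_pow, abs_pow]
    have h1 : |u i| ≤ 1 := by rw [← hu]; exact abs_coord_le u i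
    have h2 : |u j| ≤ 1 := by rw [← hu]; exact abs_coord_le u j
    calc |u i|^a * |u j|^b ≤ 1 * 1 :=
          mul_le_mul (pow_le_one₀ (abs_nonneg _) h1) (pow_le_one₀ (abs_nonneg _) h2)
            (by positivity) zero_le_one
      _ = 1 := mul_one 1
  have habs_int : Integrable (fun u : EuclideanSpace ℝ (Fin d) => |u z|) μ := by
    refine integ_bdd' μ hsupp _
      (continuous_abs.measurable.comp (meas_coord' z)).aestronglyMeasurable 1 ?_
    intro u hu
    rw [Real.norm_eq_abs, abs_abs, ← hu]
    exact abs_coord_le u z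
  -- PART 1
  have hgn : (0:ℝ) < ‖g‖ := norm_pos_iff.mpr hg
  set v : EuclideanSpace ℝ (Fin d) := ‖g‖⁻¹ • g with hvdef
  have hvnorm : ‖v‖ = 1 := by
    rw [hvdef, norm_smul, Real.norm_eq_abs, abs_of_pos (inv_pos.mpr hgn),
      inv_mul_cancel₀ hgn.ne']
  have hsgn_eq : ∀ u : EuclideanSpace ℝ (Fin d), sgn ⟪g, u⟫ = sgn ⟪v, u⟫ := by
    intro u
    rw [hvdef, real_inner_smul_left]
    unfold sgn
    rcases le_or_gt 0 (⟪g, u⟫ : ℝ) with h | h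
    · rw [if_pos h, if_pos (mul_nonneg (inv_pos.mpr hgn).le h)]
    · rw [if_neg (not_le.mpr h), if_neg (not_le.mpr (mul_neg_of_pos_of_neg (inv_pos.mpr hgn) h))]
  have hFint : Integrable (fun u : EuclideanSpace ℝ (Fin d) => sgn ⟪v, u⟫ • u) μ := by
    refine integ_bdd' μ hsupp _ ((hsm v).smul measurable_id).aestronglyMeasurable 1 ?_
    intro u hu
    rw [norm_smul, Real.norm_eq_abs, habs_sgn, hu, one_mul]
  -- bounded integrability for scalar integrands sgn * inner
  have hsi_int : ∀ p : EuclideanSpace ℝ (Fin d),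
      Integrable (fun u : EuclideanSpace ℝ (Fin d) => sgn ⟪v, u⟫ * ⟪p, u⟫) μ := by
    intro p
    refine integ_bdd' μ hsupp _ ((hsm v).mul (hinner p)).aestronglyMeasurable ‖p‖ ?_
    intro u hu
    rw [Real.norm_eq_abs, abs_mul, habs_sgn, one_mul]
    calc |(⟪p, u⟫ : ℝ)| ≤ ‖p‖ * ‖u‖ := abs_real_inner_le_norm p u
      _ = ‖p‖ := by rw [hu, mul_one]
  have hT1 : ∫ u, sgn ⟪v, u⟫ * ⟪v, u⟫ ∂μ = ∫ u, |u z| ∂μ := by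
    calc ∫ u, sgn ⟪v, u⟫ * ⟪v, u⟫ ∂μ = ∫ u, |(⟪v, u⟫ : ℝ)| ∂μ := by
          refine integral_congr_ae (Filter.Eventually.of_forall fun u => ?_)
          exact hsgn_mul _
      _ = ∫ u, |u z| ∂μ :=
          inner_moment μ hinv v hvnorm z (fun t => |t|) continuous_abs.measurable
  have hT2 : ∀ p : EuclideanSpace ℝ (Fin d), ⟪v, p⟫ = 0 →
      ∫ u, sgn ⟪v, u⟫ * ⟪p, u⟫ ∂μ = 0 := by
    intro p hp
    rcases eq_or_ne p 0 with rfl | hp0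
    · simp
    · set R := Submodule.reflection (ℝ ∙ p)ᗮ with hRdef
      have hRv : R v = v := by
        apply Submodule.reflection_mem_subspace_eq_self
        rw [Submodule.mem_orthogonal_singleton_iff_inner_left]
        exact hp
      have hRp : R p = -p := Submodule.reflection_orthogonalComplement_singleton_eq_neg p
      have h := key_cov μ R (hinv R) _ ((hsm v).mul (hinner p)).aestronglyMeasurable
      have h2 : ∫ u, sgn ⟪v, R u⟫ * ⟪p, R u⟫ ∂μ = - ∫ u, sgn ⟪v, u⟫ * ⟪p, u⟫ ∂μ := by
        rw [← integral_neg]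
        refine integral_congr_ae (Filter.Eventually.of_forall fun u => ?_)
        dsimp only
        rw [refl_adj, refl_adj, hRv, hRp, inner_neg_left]
        ring
      simp only [Pi.mul_apply] at h
      rw [h2] at h
      linarith
  have hI : ∫ u, sgn ⟪v, u⟫ • u ∂μ = (∫ u, |u z| ∂μ) • v := by
    refine ext_inner_left ℝ fun w => ?_
    rw [← integral_inner hFint w, real_inner_smul_right]
    set p : EuclideanSpace ℝ (Fin d) := w - ⟪v, w⟫ • v with hpdef
    have hvp : ⟪v, p⟫ = 0 := by
      rw [hpdef, inner_sub_right, real_inner_smul_right, real_inner_self_eq_norm_sq, hvnorm]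
      ring
    calc ∫ u, ⟪w, sgn ⟪v, u⟫ • u⟫ ∂μ
        = ∫ u, ((⟪v, w⟫ : ℝ) * (sgn ⟪v, u⟫ * ⟪v, u⟫) + sgn ⟪v, u⟫ * ⟪p, u⟫) ∂μ := by
          refine integral_congr_ae (Filter.Eventually.of_forall fun u => ?_)
          dsimp only
          rw [real_inner_smul_right w u (sgn ⟪v, u⟫), hpdef, inner_sub_left,
            real_inner_smul_left v u ⟪v, w⟫]
          ring
      _ = (⟪v, w⟫ : ℝ) * (∫ u, sgn ⟪v, u⟫ * ⟪v, u⟫ ∂μ) + ∫ u, sgn ⟪v, u⟫ * ⟪p, u⟫ ∂μ := by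
          rw [integral_add ((hsi_int v).const_mul _) (hsi_int p), integral_const_mul]
      _ = (⟪v, w⟫ : ℝ) * (∫ u, |u z| ∂μ) + 0 := by rw [hT1, hT2 p hvp]
      _ = (∫ u, |u z| ∂μ) * ⟪w, v⟫ := by rw [real_inner_comm v w]; ring
  have hpart1 : (∫ u, sgn ⟪g, u⟫ • u ∂μ) = (∫ u, |u z| ∂μ) • v := by
    rw [← hI]
    refine integral_congr_ae (Filter.Eventually.of_forall fun u => ?_)
    dsimp only
    rw [hsgn_eq u]
  -- PART 3: upper bound
  have hsq_int : Integrable (fun u : EuclideanSpace ℝ (Fin d) => (u z)^2) μ := by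
    have := hmono z z 2 0
    refine this.congr (Filter.Eventually.of_forall fun u => ?_)
    dsimp only; ring
  have hquart_int : Integrable (fun u : EuclideanSpace ℝ (Fin d) => (u z)^4) μ := by
    have := hmono z z 4 0
    refine this.congr (Filter.Eventually.of_forall fun u => ?_)
    dsimp only; ring
  have hupper : (∫ u, |u z| ∂μ) ≤ 1 / s := by
    have hmono_int : ∫ u, |u z| ∂μ ≤ ∫ u, (s * (u z)^2 + 1/s) / 2 ∂μ := by
      refine integral_mono habs_int (((hsq_int.const_mul s).add (integrable_const _)).div_const 2) ?_
      intro u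
      exact aux_up s (u z) hs0
    have hcomp : ∫ u, (s * (u z)^2 + 1/s) / 2 ∂μ = 1 / s := by
      rw [integral_div, integral_add (hsq_int.const_mul s) (integrable_const _),
        integral_const_mul, hm2, integral_const, probReal_univ]
      simp only [ENNReal.toReal_one, one_smul, smul_eq_mul]
      rw [← hs2]
      field_simp
      ring
    linarith
  -- PART 2: lower bound
  have hlower : 1 / (20 * s) ≤ ∫ u, |u z| ∂μ := by
    rcases Nat.lt_or_ge d 2 with hd1 | hd2
    · -- d = 1
      have hd1' : d = 1 := by omega
      have haez : ∀ᵐ u ∂μ, |u z| = 1 := by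
        filter_upwards [hsupp] with u hu
        have hsum := sum_sq_coords u
        rw [hu, one_pow] at hsum
        have : (u z)^2 = 1 := by
          subst hd1'
          rw [← hsum]
          rw [show (Finset.univ : Finset (Fin 1)) = {z} from by
            apply Finset.eq_singleton_iff_unique_mem.mpr
            exact ⟨Finset.mem_univ z, fun x _ => Subsingleton.elim x z⟩]
          rw [Finset.sum_singleton]
        nlinarith [abs_nonneg (u z), sq_abs (u z)]
      have : ∫ u, |u z| ∂μ = 1 := by
        rw [integral_congr_ae haez]; simp
      rw [this]
      have hs1 : s = 1 := by rw [hsdef, hd1']; simp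
      rw [hs1]; norm_num
    · -- d ≥ 2
      set o : Fin d := ⟨1, hd2⟩ with ho
      have hzo : z ≠ o := by
        simp [hz, ho, Fin.ext_iff]
      have hm4 := moment4 μ hsupp hinv z o hzo
      have hd2R : (2:ℝ) ≤ d := by exact_mod_cast hd2
      have hs1 : 1 ≤ s := by nlinarith [hs2, hs0]
      have hpoint : ∀ t : ℝ, s/2 * t^2 - s^3/8 * t^4 ≤ |t| := by
        intro t
        have h := aux_low (s * |t|) (by positivity)
        have e2 : |t|^2 = t^2 := sq_abs t
        have e4 : |t|^4 = t^4 := by rw [show (4:ℕ) = 2*2 from rfl, pow_mul, pow_mul, e2]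
        rw [mul_pow s |t| 2, mul_pow s |t| 4, e2, e4] at h
        have hring : s * (s/2 * t^2 - s^3/8 * t^4) = (s^2*t^2)/2 - (s^4*t^4)/8 := by ring
        have hmul : s * (s/2 * t^2 - s^3/8 * t^4) ≤ s * |t| := by linarith
        exact le_of_mul_le_mul_left (by linarith) hs0
      have hint_lhs : Integrable (fun u : EuclideanSpace ℝ (Fin d) =>
          s/2 * (u z)^2 - s^3/8 * (u z)^4) μ :=
        (hsq_int.const_mul _).sub (hquart_int.const_mul _)
      have hmono_int : ∫ u, (s/2 * (u z)^2 - s^3/8 * (u z)^4) ∂μ ≤ ∫ u, |u z| ∂μ := by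
        refine integral_mono hint_lhs habs_int ?_
        intro u
        exact hpoint (u z)
      have hcomp : ∫ u, (s/2 * (u z)^2 - s^3/8 * (u z)^4) ∂μ
          = s/2 * (1/(d:ℝ)) - s^3/8 * (3/((d:ℝ)^2 + 2*d)) := by
        rw [integral_sub (hsq_int.const_mul _) (hquart_int.const_mul _),
          integral_const_mul, integral_const_mul, hm2, hm4]
      have harith : 1 / (20 * s) ≤ s/2 * (1/(d:ℝ)) - s^3/8 * (3/((d:ℝ)^2 + 2*d)) := by
        rw [← hs2]
        have h1 : s ≠ 0 := hs0.ne'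
        have e1 : s/2 * (1/(s^2)) = 1/(2*s) := by field_simp
        have e2 : s^3/8 * (3/((s^2)^2 + 2*s^2)) = 3*s/(8*(s^2+2)) := by
          have hx : (s^2)^2 + 2*s^2 = s^2 * (s^2+2) := by ring
          rw [hx]
          field_simp
        rw [e1, e2]
        have e3 : 3*s/(8*(s^2+2)) ≤ 3/(8*s) := by
          rw [div_le_div_iff₀ (by positivity) (by positivity)]
          nlinarith [hs0]
        have e4 : 1/(20*s) ≤ 1/(8*s) := by
          rw [div_le_div_iff₀ (by positivity) (by positivity)]
          nlinarith [hs0]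
        have e5 : 1/(2*s) - 3/(8*s) = 1/(8*s) := by field_simp; ring
        linarith
      linarith
  exact ⟨hpart1, hlower, hupper⟩
end
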